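/- Let (X_t, Y_t)_{t≥0} be any Markovian coupling of two random transposition walks on S_n, i.e., a Markov chain on S_n × S_n such that each coordinate process evolves with transition matrix P̄. If X₀ ≠ Y₀, then for every t₀ ≥ 0 the meeting time T = min{t : X_t = Y_t} satisfies ℙ(T ≤ t₀) ≤ 6·t₀/n². In particular a Markovian coupling takes at least order n² time to meet with constant probability. -/

import Mathlib

noncomputable section
open scoped BigOperators Classical

/-- Total variation distance between two functions (distributions) on a finite set. -/
def tvDist {Ω : Type*} [Fintype Ω] (μ ν : Ω → ℝ) : ℝ := (∑ x, |μ x - ν x|) / 2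

/-- Transition matrix of the random transposition walk on `S_n`. -/
def rtMatrix (n : ℕ) : Matrix (Equiv.Perm (Fin n)) (Equiv.Perm (Fin n)) ℝ :=
  fun σ α =>
    ((Finset.univ.filter (fun ij : Fin n × Fin n => σ * Equiv.swap ij.1 ij.2 = α)).card : ℝ)
      / (n : ℝ) ^ 2

/-- Uniform (stationary) distribution on `S_n`. -/
def rtPi (n : ℕ) : Equiv.Perm (Fin n) → ℝ := fun _ => ((n.factorial : ℝ))⁻¹

/-- Cycle type of a permutation, as a partition of `n`. -/
def cyc (n : ℕ) (α : Equiv.Perm (Fin n)) : Nat.Partition n :=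
  cast (congrArg Nat.Partition (Fintype.card_fin n)) α.partition

/-- Transition probabilities of the split-merge chain on partitions of `n`. -/
def smKernel (n : ℕ) (p q : Nat.Partition n) : ℝ :=
  (if q = p then (1 : ℝ) / n else 0)
  + (p.parts.map (fun a =>
      ∑ r ∈ Finset.Ico 1 a,
        if q.parts = r ::ₘ (a - r) ::ₘ p.parts.erase a then (a : ℝ) / (n : ℝ) ^ 2 else 0)).sum
  + (p.parts.map (fun a =>
      ((p.parts.erase a).map (fun b =>
        if q.parts = (a + b) ::ₘ ((p.parts.erase a).erase b) then
          (a : ℝ) * (b : ℝ) / (n : ℝ) ^ 2 else 0)).sum)).sum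

/-- Transition matrix of the split-merge chain. -/
def smMatrix (n : ℕ) : Matrix (Nat.Partition n) (Nat.Partition n) ℝ := fun p q => smKernel n p q

/-- Stationary distribution of the split-merge chain: `π(σ) = |Perm(σ)|/n!`. -/
def smPi (n : ℕ) : Nat.Partition n → ℝ := fun σ =>
  ((Finset.univ.filter (fun α : Equiv.Perm (Fin n) => cyc n α = σ)).card : ℝ) / (n.factorial : ℝ)

/-- `p` is obtained from `q` by splitting one part into two. -/
def IsSplitOf (n : ℕ) (p q : Nat.Partition n) : Prop :=
  ∃ a ∈ q.parts, ∃ r : ℕ, 1 ≤ r ∧ r < a ∧ p.parts = r ::ₘ (a - r) ::ₘ q.parts.erase a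

/-- Adjacency graph of single split/merge moves on partitions of `n`. -/
def smGraph (n : ℕ) : SimpleGraph (Nat.Partition n) where
  Adj p q := p ≠ q ∧ (IsSplitOf n p q ∨ IsSplitOf n q p)
  symm := ⟨fun p q h => ⟨h.1.symm, h.2.symm⟩⟩
  loopless := ⟨fun p h => h.1 rfl⟩

/-- The split-merge graph distance `ρ` on partitions of `n`. -/
def rho (n : ℕ) (p q : Nat.Partition n) : ℕ := (smGraph n).dist p q

/-- The multiset of parts on which two partitions differ. -/
def diffParts {n : ℕ} (σ τ : Nat.Partition n) : Multiset ℕ :=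
  (σ.parts - τ.parts) + (τ.parts - σ.parts)

/-- `s(σ,τ)`: the smallest part in which adjacent `σ` and `τ` differ; `s(σ,σ) = n/2`. -/
def sPart (n : ℕ) (σ τ : Nat.Partition n) : ℝ :=
  if σ = τ then (n : ℝ) / 2 else ((((diffParts σ τ).sort (· ≤ ·)).headI : ℕ) : ℝ)

/-- `m(σ,τ)`: the medium part in which adjacent `σ` and `τ` differ; `m(σ,σ) = n`. -/
def mPart (n : ℕ) (σ τ : Nat.Partition n) : ℝ :=
  if σ = τ then (n : ℝ) else (((((diffParts σ τ).sort (· ≤ ·)).tail).headI : ℕ) : ℝ)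

/-- `|V(σ,x)|`: the sum of the parts of `σ` of size at least `x`. -/
def Vsum {n : ℕ} (σ : Nat.Partition n) (x : ℝ) : ℝ :=
  (((Multiset.filter (fun a : ℕ => x ≤ (a : ℝ)) σ.parts).sum : ℕ) : ℝ)

/-- A coupling of two split-merge chains started at `(σ, τ)`, given by the probabilities
`P t h` of each finite trajectory `h` of states at times `0, …, t`. -/
def IsSMCoupling (n : ℕ) (σ τ : Nat.Partition n)
    (P : (t : ℕ) → (Fin (t + 1) → Nat.Partition n × Nat.Partition n) → ℝ) : Prop :=
  (∀ t h, 0 ≤ P t h) ∧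
  (P 0 (fun _ => (σ, τ)) = 1) ∧
  (∀ (t : ℕ) (h : Fin (t + 1) → Nat.Partition n × Nat.Partition n),
      P t h = ∑ z : Nat.Partition n × Nat.Partition n, P (t + 1) (Fin.snoc h z)) ∧
  (∀ (t : ℕ) (h : Fin (t + 1) → Nat.Partition n × Nat.Partition n) (a : Nat.Partition n),
      ∑ b : Nat.Partition n, P (t + 1) (Fin.snoc h (a, b))
        = smKernel n (h (Fin.last t)).1 a * P t h) ∧
  (∀ (t : ℕ) (h : Fin (t + 1) → Nat.Partition n × Nat.Partition n) (b : Nat.Partition n),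
      ∑ a : Nat.Partition n, P (t + 1) (Fin.snoc h (a, b))
        = smKernel n (h (Fin.last t)).2 b * P t h)

/-- The coupling is coalescent: once the two coordinates meet they stay together. -/
def IsCoalescent (n : ℕ)
    (P : (t : ℕ) → (Fin (t + 1) → Nat.Partition n × Nat.Partition n) → ℝ) : Prop :=
  ∀ (t : ℕ) (h : Fin (t + 1) → Nat.Partition n × Nat.Partition n), P t h ≠ 0 →
    ∀ i j : Fin (t + 1), i ≤ j → (h i).1 = (h i).2 → (h j).1 = (h j).2

/-- Along the coupling, `ρ(X_t, Y_t) ≤ 1` almost surely. -/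
def StaysClose (n : ℕ)
    (P : (t : ℕ) → (Fin (t + 1) → Nat.Partition n × Nat.Partition n) → ℝ) : Prop :=
  ∀ (t : ℕ) (h : Fin (t + 1) → Nat.Partition n × Nat.Partition n), P t h ≠ 0 →
    ∀ i : Fin (t + 1), rho n (h i).1 (h i).2 ≤ 1

/-- On the event `X_t ≠ Y_t`, the conditional probability of meeting at time `t+1`
is at least `4 s(X_t,Y_t)/n²`. -/
def MeetLowerBound (n : ℕ)
    (P : (t : ℕ) → (Fin (t + 1) → Nat.Partition n × Nat.Partition n) → ℝ) : Prop :=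
  ∀ (t : ℕ) (h : Fin (t + 1) → Nat.Partition n × Nat.Partition n),
    (h (Fin.last t)).1 ≠ (h (Fin.last t)).2 →
      4 * sPart n (h (Fin.last t)).1 (h (Fin.last t)).2 / (n : ℝ) ^ 2 * P t h ≤
        ∑ z : Nat.Partition n, P (t + 1) (Fin.snoc h (z, z))

/-- Probability that the pair of chains at time `t` satisfies `E`. -/
def probAt (n : ℕ)
    (P : (t : ℕ) → (Fin (t + 1) → Nat.Partition n × Nat.Partition n) → ℝ) (t : ℕ)
    (E : Nat.Partition n × Nat.Partition n → Prop) : ℝ :=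
  ∑ h : Fin (t + 1) → Nat.Partition n × Nat.Partition n,
    if E (h (Fin.last t)) then P t h else 0

/-- Expectation of `g(X_t, Y_t)`. -/
def expAt (n : ℕ)
    (P : (t : ℕ) → (Fin (t + 1) → Nat.Partition n × Nat.Partition n) → ℝ) (t : ℕ)
    (g : Nat.Partition n × Nat.Partition n → ℝ) : ℝ :=
  ∑ h : Fin (t + 1) → Nat.Partition n × Nat.Partition n, P t h * g (h (Fin.last t))

/-- A coupling of one step of the split-merge chain from `σ` and from `τ`. -/
def IsOneStepCoupling (n : ℕ) (σ τ : Nat.Partition n)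
    (μ : Nat.Partition n × Nat.Partition n → ℝ) : Prop :=
  (∀ z, 0 ≤ μ z) ∧ (∀ p, ∑ q, μ (p, q) = smKernel n σ p) ∧
    (∀ q, ∑ p, μ (p, q) = smKernel n τ q)

/-- Length of the cycle of `α` containing `v`. -/
def cycLen {n : ℕ} (α : Equiv.Perm (Fin n)) (v : Fin n) : ℕ :=
  Function.minimalPeriod ⇑α v

/-!
From `(x, y)` with `x ≠ y`, a coupled step lands on the diagonal only at a common neighbour `a`
of `x` and `y` in the Cayley graph of transpositions, and does so with probability at most
`min (P̄ x a) (P̄ y a) ≤ 2 / n²`. Writing `δ = x⁻¹ y ≠ 1`, common neighbours correspond to the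
`s ∈ {1} ∪ {transpositions}` with `δ⁻¹ s` in the same set, and there are at most three of them.
So each step meets with probability at most `6 / n²`, and a union bound over the first `t₀`
steps gives the claim.
-/

open Finset Equiv Equiv.Perm

section Hitting

variable {ι : Type*} (Q : Matrix ι ι ℝ) (p : ι → Prop) [DecidablePred p]

def killedMatrix : Matrix ι ι ℝ := Matrix.of fun u v => if p v then 0 else Q u v

variable {Q p}

lemma killedMatrix_apply (u v : ι) : killedMatrix Q p u v = if p v then 0 else Q u v := rfl

variable [Fintype ι]

lemma sum_mul_apply_eq_sum_mul_sum (A B : Matrix ι ι ℝ) (x : ι) :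
    ∑ v, (A * B) x v = ∑ u, A x u * ∑ v, B u v := by
  simp only [Matrix.mul_apply, mul_sum]
  exact sum_comm

lemma sum_killedMatrix_apply (u : ι) :
    ∑ v, killedMatrix Q p u v = ∑ v, Q u v - ∑ v, if p v then Q u v else 0 := by
  rw [eq_sub_iff_add_eq, ← sum_add_distrib]
  exact sum_congr rfl fun v _ => by rw [killedMatrix_apply]; split_ifs <;> simp

variable [DecidableEq ι]

lemma killedMatrix_pow_apply_nonneg (hQ : ∀ u v, 0 ≤ Q u v) (t : ℕ) (u v : ι) :
    0 ≤ (killedMatrix Q p ^ t) u v := by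
  induction t generalizing v with
  | zero => rw [pow_zero, Matrix.one_apply]; positivity
  | succ t ih =>
    rw [pow_succ, Matrix.mul_apply]
    refine sum_nonneg fun w _ => mul_nonneg (ih w) ?_
    rw [killedMatrix_apply]
    split_ifs <;> simp [hQ]

lemma killedMatrix_pow_apply_eq_zero {x v : ι} (hx : ¬p x) (hv : p v) (t : ℕ) :
    (killedMatrix Q p ^ t) x v = 0 := by
  cases t with
  | zero => rw [pow_zero, Matrix.one_apply_ne]; rintro rfl; exact hx hv
  | succ t =>
    rw [pow_succ, Matrix.mul_apply]
    exact sum_eq_zero fun w _ => by simp [killedMatrix, hv]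

lemma sum_killedMatrix_pow_apply_le_one (hQ : ∀ u v, 0 ≤ Q u v) (hQ₁ : ∀ u, ∑ v, Q u v = 1)
    (t : ℕ) (x : ι) : ∑ v, (killedMatrix Q p ^ t) x v ≤ 1 := by
  induction t with
  | zero => simp [Matrix.one_apply]
  | succ t ih =>
    rw [pow_succ, sum_mul_apply_eq_sum_mul_sum]
    refine (sum_le_sum fun u _ => mul_le_of_le_one_right
      (killedMatrix_pow_apply_nonneg hQ t x u) ?_).trans ih
    rw [sum_killedMatrix_apply, hQ₁]
    exact sub_le_self _ (sum_nonneg fun v _ => by split_ifs <;> simp [hQ])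

/-- If from every state outside `p` a single step of `Q` enters `p` with probability at most
`ε`, a chain started outside `p` has entered `p` by time `t` with probability at most `ε t`. -/
theorem one_sub_sum_killedMatrix_pow_apply_le (hQ : ∀ u v, 0 ≤ Q u v)
    (hQ₁ : ∀ u, ∑ v, Q u v = 1) {ε : ℝ} (hε : ∀ u, ¬p u → ∑ v, (if p v then Q u v else 0) ≤ ε)
    {x : ι} (hx : ¬p x) (t : ℕ) : 1 - ∑ v, (killedMatrix Q p ^ t) x v ≤ ε * t := by
  induction t with
  | zero => simp [Matrix.one_apply]
  | succ t ih =>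
    set f := fun u => ∑ v, (if p v then Q u v else 0)
    have hstep : ∑ v, (killedMatrix Q p ^ (t + 1)) x v
        = ∑ v, (killedMatrix Q p ^ t) x v - ∑ u, (killedMatrix Q p ^ t) x u * f u := by
      simp only [pow_succ, sum_mul_apply_eq_sum_mul_sum, sum_killedMatrix_apply, hQ₁, mul_sub,
        mul_one, sum_sub_distrib, f]
    have hkill : ∑ u, (killedMatrix Q p ^ t) x u * f u ≤ ε := by
      calc ∑ u, (killedMatrix Q p ^ t) x u * f u ≤ ∑ u, (killedMatrix Q p ^ t) x u * ε := by
            refine sum_le_sum fun u _ => ?_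
            by_cases hu : p u
            · simp [killedMatrix_pow_apply_eq_zero hx hu]
            · exact mul_le_mul_of_nonneg_left (hε u hu) (killedMatrix_pow_apply_nonneg hQ t x u)
        _ ≤ ε := by
            rw [← sum_mul]
            exact mul_le_of_le_one_left ((hε x hx).trans' (sum_nonneg fun v _ => by
              split_ifs <;> simp [hQ])) (sum_killedMatrix_pow_apply_le_one hQ hQ₁ t x)
    push_cast
    linarith

end Hitting

section Transpositions

variable {α : Type*} [DecidableEq α]

lemma mem_of_swap_mul_swap_apply_ne {p q r t w : α} (hw : (swap p q * swap r t) w ≠ w) :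
    w = p ∨ w = q ∨ w = r ∨ w = t := by
  contrapose! hw
  rw [Perm.mul_apply, swap_apply_of_ne_of_ne hw.2.2.1 hw.2.2.2, swap_apply_of_ne_of_ne hw.1 hw.2.1]

lemma exists_eq_swap_apply_of_isSwap {δ s : Perm α} (hδ : δ ≠ 1) (hs : s.IsSwap)
    (ht : (δ⁻¹ * s).IsSwap) : ∃ w, δ w ≠ w ∧ s = swap w (δ w) := by
  obtain ⟨u, v, huv, rfl⟩ := hs
  obtain ⟨c, d, -, hcd⟩ := ht
  obtain rfl : δ = swap u v * swap c d := by rw [← swap_inv c d, ← hcd]; group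
  by_cases hu : u = c ∨ u = d
  · obtain ⟨d', hd'⟩ : ∃ d', swap c d = swap u d' := by
      rcases hu with rfl | rfl
      exacts [⟨d, rfl⟩, ⟨c, swap_comm _ _⟩]
    rw [hd'] at hδ ⊢
    have hvd' : v ≠ d' := by rintro rfl; exact hδ (swap_mul_self u v)
    have hδv : (swap u v * swap u d') v = u := by
      rw [Perm.mul_apply, swap_apply_of_ne_of_ne huv.symm hvd', swap_apply_right]
    refine ⟨v, ?_, ?_⟩ <;> rw [hδv]
    exacts [huv, swap_comm _ _]
  · simp only [not_or] at hu
    have hδu : (swap u v * swap c d) u = v := by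
      rw [Perm.mul_apply, swap_apply_of_ne_of_ne hu.1 hu.2, swap_apply_left]
    refine ⟨u, ?_, ?_⟩ <;> rw [hδu]
    exact huv.symm

variable [Fintype α]

lemma card_filter_swap_eq_le_two {σ : Perm α} (hσ : σ ≠ 1) :
    #{ij : α × α | swap ij.1 ij.2 = σ} ≤ 2 := by
  rcases (univ.filter fun ij : α × α => swap ij.1 ij.2 = σ).eq_empty_or_nonempty
    with h | ⟨⟨i, j⟩, hij⟩
  · simp [h]
  have hσij : swap i j = σ := (mem_filter.1 hij).2
  have hne : i ≠ j := by rintro rfl; exact hσ (by rw [← hσij, swap_self]; rfl)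
  calc #{ij : α × α | swap ij.1 ij.2 = σ} ≤ #σ.support := by
        refine card_le_card_of_injOn Prod.fst ?_ ?_
        · rintro ⟨k, l⟩ hkl
          simp only [coe_filter, mem_univ, true_and, Set.mem_ofPred_eq] at hkl
          rw [mem_coe, mem_support, ← hkl, swap_apply_left]
          rintro rfl
          exact hσ (by rw [← hkl, swap_self]; rfl)
        · rintro ⟨k, l⟩ hkl ⟨k', l'⟩ hkl' (rfl : k = k')
          simp only [coe_filter, mem_univ, true_and, Set.mem_ofPred_eq] at hkl hkl'
          refine Prod.ext rfl ?_
          calc l = swap k l k := (swap_apply_left k l).symm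
            _ = l' := by rw [hkl, ← hkl', swap_apply_left]
    _ = 2 := hσij ▸ card_support_swap hne

/-- These `s` are `1` and `δ` if `δ` is a transposition, and otherwise the transpositions `s` with
`δ = s * t` for a transposition `t`: three for a `3`-cycle, two for a product of two disjoint
transpositions. -/
lemma card_filter_isSwap_or_one_le_three {δ : Perm α} (hδ : δ ≠ 1) :
    #{s : Perm α | (s = 1 ∨ s.IsSwap) ∧ (δ⁻¹ * s = 1 ∨ (δ⁻¹ * s).IsSwap)} ≤ 3 := by
  set S := univ.filter fun s : Perm α => (s = 1 ∨ s.IsSwap) ∧ (δ⁻¹ * s = 1 ∨ (δ⁻¹ * s).IsSwap)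
  by_cases hδs : δ.IsSwap
  · calc #S ≤ #{1, δ} := card_le_card fun s hs => ?_
      _ ≤ 3 := card_le_two.trans (by norm_num)
    obtain ⟨rfl | hs₁, hs₂ | hs₂⟩ := (mem_filter.1 hs).2
    · simp
    · simp
    · simp [inv_mul_eq_one.1 hs₂]
    · have hsign := hs₂.sign_eq
      rw [map_mul, map_inv, hδs.sign_eq, hs₁.sign_eq] at hsign
      exact absurd hsign (by decide)
  have hS : ∀ s ∈ S, s.IsSwap ∧ (δ⁻¹ * s).IsSwap := by
    intro s hs
    obtain ⟨rfl | hs₁, h₂ | hs₂⟩ := (mem_filter.1 hs).2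
    · exact absurd (by simpa using h₂) hδ
    · rw [mul_one] at hs₂
      obtain ⟨a, b, hab, h⟩ := hs₂
      exact absurd ⟨a, b, hab, by rw [← inv_inv δ, h, swap_inv]⟩ hδs
    · exact absurd (inv_mul_eq_one.1 h₂ ▸ hs₁) hδs
    · exact ⟨hs₁, hs₂⟩
  rcases S.eq_empty_or_nonempty with hempty | ⟨s₀, hs₀⟩
  · simp [hempty]
  obtain ⟨⟨p, q, -, rfl⟩, ⟨r, t, -, hrt⟩⟩ := hS s₀ hs₀
  have hδ' : δ = swap p q * swap r t := by rw [← swap_inv r t, ← hrt]; group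
  calc #S ≤ #{swap p q, swap r (δ r), swap t (δ t)} := card_le_card fun s hs => ?_
    _ ≤ 3 := card_le_three
  obtain ⟨w, hw, rfl⟩ := exists_eq_swap_apply_of_isSwap hδ (hS s hs).1 (hS s hs).2
  by_cases hwrt : w = r ∨ w = t
  · rcases hwrt with rfl | rfl <;> simp
  simp only [not_or] at hwrt
  have hδw : δ w = swap p q w := by rw [hδ', Perm.mul_apply, swap_apply_of_ne_of_ne hwrt.1 hwrt.2]
  rcases mem_of_swap_mul_swap_apply_ne (hδ' ▸ hw) with rfl | rfl | rfl | rfl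
  · simp [hδw]
  · simp [hδw, swap_comm]
  · exact absurd rfl hwrt.1
  · exact absurd rfl hwrt.2

end Transpositions

section RandomTransposition

variable {n : ℕ}

lemma rtMatrix_eq_card_div (x a : Perm (Fin n)) :
    rtMatrix n x a = #{ij : Fin n × Fin n | swap ij.1 ij.2 = x⁻¹ * a} / (n : ℝ) ^ 2 := by
  simp only [rtMatrix, eq_inv_mul_iff_mul_eq]

lemma sum_rtMatrix (hn : 1 ≤ n) (x : Perm (Fin n)) : ∑ a, rtMatrix n x a = 1 := by
  have hcard := card_eq_sum_card_fiberwise (f := fun ij : Fin n × Fin n => x * swap ij.1 ij.2)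
    (s := univ) (t := univ) fun _ _ => mem_univ _
  simp only [card_univ, Fintype.card_prod, Fintype.card_fin] at hcard
  simp only [rtMatrix]
  rw [← sum_div, ← Nat.cast_sum, ← hcard, div_eq_one_iff_eq (by positivity)]
  push_cast
  ring

lemma rtMatrix_le_of_ne {x a : Perm (Fin n)} (h : x ≠ a) : rtMatrix n x a ≤ 2 / (n : ℝ) ^ 2 := by
  rw [rtMatrix_eq_card_div]
  gcongr
  exact_mod_cast card_filter_swap_eq_le_two (mt inv_mul_eq_one.1 h)

lemma rtMatrix_eq_zero_of_not_inv_mul_eq_one_or_isSwap {x a : Perm (Fin n)}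
    (h : ¬(x⁻¹ * a = 1 ∨ (x⁻¹ * a).IsSwap)) : rtMatrix n x a = 0 := by
  rw [rtMatrix_eq_card_div, div_eq_zero_iff, Nat.cast_eq_zero, card_eq_zero]
  left
  refine filter_eq_empty_iff.2 fun ⟨i, j⟩ _ hij => h ?_
  rw [← hij]
  by_cases hij : i = j
  · exact Or.inl (by rw [hij, swap_self]; rfl)
  · exact Or.inr ⟨i, j, hij, rfl⟩

theorem sum_coupling_diag_le {x y : Perm (Fin n)} (hxy : x ≠ y)
    {μ : Perm (Fin n) × Perm (Fin n) → ℝ} (hμ : ∀ z, 0 ≤ μ z)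
    (hx : ∀ a, ∑ b, μ (a, b) = rtMatrix n x a) (hy : ∀ b, ∑ a, μ (a, b) = rtMatrix n y b) :
    ∑ a, μ (a, a) ≤ 6 / (n : ℝ) ^ 2 := by
  have hμx (a) : μ (a, a) ≤ rtMatrix n x a :=
    hx a ▸ single_le_sum (f := fun b => μ (a, b)) (fun b _ => hμ _) (mem_univ a)
  have hμy (a) : μ (a, a) ≤ rtMatrix n y a :=
    hy a ▸ single_le_sum (f := fun b => μ (b, a)) (fun b _ => hμ _) (mem_univ a)
  set D := univ.filter fun a : Perm (Fin n) =>
    (x⁻¹ * a = 1 ∨ (x⁻¹ * a).IsSwap) ∧ (y⁻¹ * a = 1 ∨ (y⁻¹ * a).IsSwap)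
  have hD : #D ≤ 3 := by
    refine (card_le_card_of_injOn (x⁻¹ * ·) (fun a ha => ?_) (mul_right_injective _).injOn).trans
      (card_filter_isSwap_or_one_le_three (δ := x⁻¹ * y) (mt inv_mul_eq_one.1 hxy))
    simp only [D, coe_filter, mem_univ, true_and, Set.mem_ofPred_eq] at ha ⊢
    rwa [show (x⁻¹ * y)⁻¹ * (x⁻¹ * a) = y⁻¹ * a by group]
  have hμD (a) (ha : a ∉ D) : μ (a, a) = 0 := by
    simp only [D, mem_filter, mem_univ, true_and, not_and_or] at ha
    refine le_antisymm ?_ (hμ _)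
    rcases ha with ha | ha
    · exact (hμx a).trans_eq (rtMatrix_eq_zero_of_not_inv_mul_eq_one_or_isSwap ha)
    · exact (hμy a).trans_eq (rtMatrix_eq_zero_of_not_inv_mul_eq_one_or_isSwap ha)
  have hμ₂ (a) : μ (a, a) ≤ 2 / (n : ℝ) ^ 2 := by
    rcases eq_or_ne x a with rfl | hxa
    · exact (hμy x).trans (rtMatrix_le_of_ne hxy.symm)
    · exact (hμx a).trans (rtMatrix_le_of_ne hxa)
  calc ∑ a, μ (a, a) = ∑ a ∈ D, μ (a, a) := (sum_subset (subset_univ D) fun a _ => hμD a).symm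
    _ ≤ #D • (2 / (n : ℝ) ^ 2) := sum_le_card_nsmul _ _ _ fun a _ => hμ₂ a
    _ ≤ 3 • (2 / (n : ℝ) ^ 2) := by gcongr
    _ = 6 / (n : ℝ) ^ 2 := by norm_num; ring

end RandomTransposition

/-- The probability of having met by time `t₀` is expressed as `1` minus the total mass of the
diagonal-avoiding (killed) transition matrix. -/
theorem markovian_coupling_slow (n : ℕ) (hn : 1 ≤ n)
    (Q : Matrix (Equiv.Perm (Fin n) × Equiv.Perm (Fin n))
        (Equiv.Perm (Fin n) × Equiv.Perm (Fin n)) ℝ)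
    (hpos : ∀ u v, 0 ≤ Q u v)
    (h1 : ∀ x y a, ∑ b, Q (x, y) (a, b) = rtMatrix n x a)
    (h2 : ∀ x y b, ∑ a, Q (x, y) (a, b) = rtMatrix n y b)
    (x₀ y₀ : Equiv.Perm (Fin n)) (hne : x₀ ≠ y₀) (t₀ : ℕ) :
    1 - ∑ w, (((Matrix.of fun u v => if v.1 = v.2 then (0 : ℝ) else Q u v) ^ t₀) (x₀, y₀)) w
      ≤ 6 * t₀ / (n : ℝ) ^ 2 := by
  have hQ₁ (u : Perm (Fin n) × Perm (Fin n)) : ∑ v, Q u v = 1 := by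
    rw [Fintype.sum_prod_type]
    simp_rw [h1 u.1 u.2]
    exact sum_rtMatrix hn u.1
  have hdiag (u : Perm (Fin n) × Perm (Fin n)) (hu : ¬u.1 = u.2) :
      ∑ v, (if v.1 = v.2 then Q u v else 0) ≤ 6 / (n : ℝ) ^ 2 := by
    simp only [Fintype.sum_prod_type, sum_ite_eq, mem_univ, if_true]
    exact sum_coupling_diag_le hu (hpos u) (h1 u.1 u.2) (h2 u.1 u.2)
  exact (one_sub_sum_killedMatrix_pow_apply_le hpos hQ₁ hdiag (x := (x₀, y₀)) hne t₀).trans_eq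
    (div_mul_eq_mul_div _ _ _)

end
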